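/- Let τ be a rooted binary tree topology on X, X̄ ⊆ X with |X̄| ≥ 2, and let a, d ∈ τ with d a strict descendant of a in τ such that both restrictions a|X̄ and d|X̄ are nontrivial. Then (a|X̄ → d|X̄) is a PCSP of τ|X̄ (i.e. a|X̄ is the parent subsplit of d|X̄ in τ|X̄) if and only if every subsplit of τ lying strictly between a and d on the parent–child path from a to d has trivial restriction to X̄. -/

import Mathlib

open Finset

attribute [local instance] Classical.propDecidable

/-- A subsplit on taxa of type `α`: an unordered pair of finite subsets of taxa. -/
abbrev Subsplit (α : Type*) := Sym2 (Finset α)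

/-- A parent-child subsplit pair (PCSP): a pair `(t, s)` of subsplits. -/
abbrev PCSPair (α : Type*) := Subsplit α × Subsplit α

namespace Subsplit

variable {α : Type*} [DecidableEq α]

/-- The parent clade `U(s)` of a subsplit: the union of its two child clades. -/
def clade (s : Subsplit α) : Finset α :=
  Sym2.lift ⟨fun Y Z => Y ∪ Z, fun _ _ => Finset.union_comm _ _⟩ s

/-- A subsplit is valid when its two child clades are disjoint. -/
def Valid (s : Subsplit α) : Prop :=
  Sym2.lift ⟨fun Y Z => Disjoint Y Z, fun _ _ => propext disjoint_comm⟩ s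

/-- A subsplit is nontrivial when both child clades are nonempty. -/
def Nontriv (s : Subsplit α) : Prop :=
  Sym2.lift ⟨fun Y Z => Y.Nonempty ∧ Z.Nonempty, fun _ _ => propext and_comm⟩ s

/-- Restriction of a subsplit to a taxon subset `B`. -/
def restrict (s : Subsplit α) (B : Finset α) : Subsplit α := Sym2.map (fun Y => Y ∩ B) s

end Subsplit

section Defs

variable {α : Type*} [DecidableEq α]

/-- `τ` is a rooted binary tree topology on the clade `W`. -/
structure IsTopology (W : Finset α) (τ : Finset (Subsplit α)) : Prop where
  two_le : 2 ≤ W.card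
  valid : ∀ s ∈ τ, Subsplit.Valid s
  nontriv : ∀ s ∈ τ, Subsplit.Nontriv s
  root : ∃! s, s ∈ τ ∧ Subsplit.clade s = W
  children : ∀ s ∈ τ, ∀ C ∈ s, 2 ≤ C.card → ∃! s', s' ∈ τ ∧ Subsplit.clade s' = C
  parentEx : ∀ s ∈ τ, Subsplit.clade s = W ∨ ∃ t ∈ τ, Subsplit.clade s ∈ t

/-- Restriction of a topology (set of subsplits) to taxon subset `B`:
restrict every subsplit and keep the nontrivial results. -/
noncomputable def restrictT (τ : Finset (Subsplit α)) (B : Finset α) : Finset (Subsplit α) :=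
  (τ.image (fun s => Subsplit.restrict s B)).filter (fun s => Subsplit.Nontriv s)

/-- A subsplit support on taxon set `X'`: a set of valid nontrivial subsplits on `X'`. -/
def IsSupport (X' : Finset α) (S : Set (Subsplit α)) : Prop :=
  ∀ s ∈ S, Subsplit.Valid s ∧ Subsplit.Nontriv s ∧ Subsplit.clade s ⊆ X'

/-- `S(W)`: members of `S` dividing the clade `W`, together with the trivial subsplit `{W, ∅}`. -/
def supportAt (S : Set (Subsplit α)) (W : Finset α) : Set (Subsplit α) :=
  {s | s ∈ S ∧ Subsplit.clade s = W} ∪ {s(W, (∅ : Finset α))}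

/-- The set `s₁ ⊠ s₂` of the two candidate combinations of two subsplits. -/
def boxTimes (s₁ s₂ : Subsplit α) : Set (Subsplit α) :=
  {s | ∃ Y₁ Z₁ Y₂ Z₂ : Finset α, s₁ = s(Y₁, Z₁) ∧ s₂ = s(Y₂, Z₂) ∧
    (s = s(Y₁ ∪ Y₂, Z₁ ∪ Z₂) ∨ s = s(Y₁ ∪ Z₂, Z₁ ∪ Y₂))}

/-- Reachable clades in the mutual subsplit support construction. -/
inductive ReachClade (S₁ S₂ : Set (Subsplit α)) (X₁ X₂ : Finset α) : Finset α → Prop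
  | root : ReachClade S₁ S₂ X₁ X₂ (X₁ ∪ X₂)
  | step {W : Finset α} {s₁ s₂ s : Subsplit α} {C : Finset α} :
      ReachClade S₁ S₂ X₁ X₂ W →
      s₁ ∈ supportAt S₁ (W ∩ X₁) → s₂ ∈ supportAt S₂ (W ∩ X₂) →
      s ∈ boxTimes s₁ s₂ → Subsplit.Valid s → Subsplit.Nontriv s →
      C ∈ s → 2 ≤ C.card → ReachClade S₁ S₂ X₁ X₂ C

/-- The mutual subsplit support `M(S₁, S₂)`. -/
def mutualSupport (S₁ S₂ : Set (Subsplit α)) (X₁ X₂ : Finset α) : Set (Subsplit α) :=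
  {s | ∃ W s₁ s₂, ReachClade S₁ S₂ X₁ X₂ W ∧
    s₁ ∈ supportAt S₁ (W ∩ X₁) ∧ s₂ ∈ supportAt S₂ (W ∩ X₂) ∧
    s ∈ boxTimes s₁ s₂ ∧ Subsplit.Valid s ∧ Subsplit.Nontriv s}

/-- `(t, s)` is a PCSP on taxon set `X`: `s` is a valid nontrivial subsplit, and `t` is a
subsplit (or the root placeholder `⟨X, ∅⟩`) on `X` having `U(s)` as a child clade. -/
def IsPCSPOn (X : Finset α) (p : PCSPair α) : Prop :=
  Subsplit.Valid p.2 ∧ Subsplit.Nontriv p.2 ∧ Subsplit.Valid p.1 ∧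
    Subsplit.clade p.2 ∈ p.1 ∧ Subsplit.clade p.1 ⊆ X ∧
    (Subsplit.Nontriv p.1 ∨ p.1 = s(X, (∅ : Finset α)))

/-- A PCSP support on taxon set `X'`. -/
def IsPCSPSupport (X' : Finset α) (P : Set (PCSPair α)) : Prop :=
  ∀ p ∈ P, IsPCSPOn X' p

/-- The subsplits of a PCSP support: subsplits occurring in some pair of `P`,
together with the root placeholder `⟨X', ∅⟩`. -/
def subsplitsOfP (X' : Finset α) (P : Set (PCSPair α)) : Set (Subsplit α) :=
  {u | (∃ s, (u, s) ∈ P) ∨ (∃ t, (t, u) ∈ P)} ∪ {s(X', (∅ : Finset α))}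

/-- `P(t/W)`: the subsplits `s` with `U(s) = W` and `(t → s) ∈ P`,
together with the trivial subsplit `{W, ∅}`. -/
def pcspSupportAt (P : Set (PCSPair α)) (t : Subsplit α) (W : Finset α) : Set (Subsplit α) :=
  {s | Subsplit.clade s = W ∧ (t, s) ∈ P} ∪ {s(W, (∅ : Finset α))}

/-- Reachable states `(t/W, t₁/W₁, t₂/W₂)` in the mutual PCSP support construction. -/
inductive ReachState (P₁ P₂ : Set (PCSPair α)) (X₁ X₂ : Finset α) :
    Subsplit α → Finset α → Subsplit α → Finset α → Subsplit α → Finset α → Prop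
  | root : ReachState P₁ P₂ X₁ X₂ (s(X₁ ∪ X₂, (∅ : Finset α))) (X₁ ∪ X₂)
      (s(X₁, (∅ : Finset α))) X₁ (s(X₂, (∅ : Finset α))) X₂
  | step {t : Subsplit α} {W : Finset α} {t₁ : Subsplit α} {W₁ : Finset α}
      {t₂ : Subsplit α} {W₂ : Finset α} {s₁ s₂ s u₁ u₂ : Subsplit α} {C : Finset α} :
      ReachState P₁ P₂ X₁ X₂ t W t₁ W₁ t₂ W₂ →
      s₁ ∈ pcspSupportAt P₁ t₁ W₁ → s₂ ∈ pcspSupportAt P₂ t₂ W₂ →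
      s ∈ boxTimes s₁ s₂ → Subsplit.Valid s → Subsplit.Nontriv s →
      ((Subsplit.Nontriv s₁ ∧ u₁ = s₁) ∨ (¬ Subsplit.Nontriv s₁ ∧ u₁ = t₁)) →
      ((Subsplit.Nontriv s₂ ∧ u₂ = s₂) ∨ (¬ Subsplit.Nontriv s₂ ∧ u₂ = t₂)) →
      C ∈ s → 2 ≤ C.card →
      ReachState P₁ P₂ X₁ X₂ s C u₁ (C ∩ X₁) u₂ (C ∩ X₂)

/-- The mutual PCSP support `M(P₁, P₂)`. -/
def mutualPCSP (P₁ P₂ : Set (PCSPair α)) (X₁ X₂ : Finset α) : Set (PCSPair α) :=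
  {p | ∃ W t₁ W₁ t₂ W₂ s₁ s₂, ReachState P₁ P₂ X₁ X₂ p.1 W t₁ W₁ t₂ W₂ ∧
    s₁ ∈ pcspSupportAt P₁ t₁ W₁ ∧ s₂ ∈ pcspSupportAt P₂ t₂ W₂ ∧
    p.2 ∈ boxTimes s₁ s₂ ∧ Subsplit.Valid p.2 ∧ Subsplit.Nontriv p.2}

/-- `PathTo M a c`: there is a chain of parent-child pairs of `M` from `a` down to `c`
(possibly empty, when `a = c`). -/
inductive PathTo (M : Set (PCSPair α)) : Subsplit α → Subsplit α → Prop
  | refl (a : Subsplit α) : PathTo M a a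
  | cons {a b c : Subsplit α} : (a, b) ∈ M → PathTo M b c → PathTo M a c

/-- `(t, s)` is a PCSP of the topology `τ` on `X`: `s ∈ τ` and `t` is a member of `τ`
having `U(s)` as a child clade, or the root placeholder `⟨X, ∅⟩` when `U(s) = X`. -/
def IsPCSPOf (X : Finset α) (τ : Finset (Subsplit α)) (t s : Subsplit α) : Prop :=
  s ∈ τ ∧ ((t ∈ τ ∧ Subsplit.clade s ∈ t) ∨
    (Subsplit.clade s = X ∧ t = s(X, (∅ : Finset α))))

/-- The set of PCSPs of a topology `τ` on `X`. -/
def pcspSet (X : Finset α) (τ : Finset (Subsplit α)) : Set (PCSPair α) :=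
  {p | IsPCSPOf X τ p.1 p.2}

/-- `a` is an ancestor of `s` in `τ`: `a ∈ τ` (or the root placeholder) and `U(s)` is
contained in a child clade of `a`. -/
def IsAncestor (X : Finset α) (τ : Finset (Subsplit α)) (a s : Subsplit α) : Prop :=
  (a ∈ τ ∨ a = s(X, (∅ : Finset α))) ∧ ∃ C ∈ a, Subsplit.clade s ⊆ C

/-- `d` is a strict descendant of `a`: `U(d)` is contained in a child clade of `a`. -/
def StrictDesc (a d : Subsplit α) : Prop := ∃ C ∈ a, Subsplit.clade d ⊆ C

/-- `d` is a (valid) descendant of `a`: `d = a`, or `U(d)` is contained in a child clade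
of `a`. -/
def Descend (a d : Subsplit α) : Prop := d = a ∨ ∃ C ∈ a, Subsplit.clade d ⊆ C

/-- The parent subsplit of `s` in `τ` (on taxon set `X`): the member of `τ` having `U(s)`
as a child clade if one exists, otherwise the root placeholder `⟨X, ∅⟩`. -/
noncomputable def parentIn (X : Finset α) (τ : Finset (Subsplit α)) (s : Subsplit α) :
    Subsplit α :=
  if h : ∃ t ∈ τ, Subsplit.clade s ∈ t then h.choose else s(X, (∅ : Finset α))

/-- The finite set of PCSPs of a topology `τ` on `X`. -/
noncomputable def pcspFinset (X : Finset α) (τ : Finset (Subsplit α)) : Finset (PCSPair α) :=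
  τ.image (fun s => (parentIn X τ s, s))

/-- All (valid) subsplits on the taxon set `X`. -/
noncomputable def allSubsplits (X : Finset α) : Finset (Subsplit α) :=
  ((X.powerset ×ˢ X.powerset).image (fun p => Sym2.mk p.1 p.2)).filter (fun s => Subsplit.Valid s)

/-- All nontrivial (valid) subsplits dividing the clade `W`. -/
noncomputable def subsplitsOn (W : Finset α) : Finset (Subsplit α) :=
  (W.powerset.image (fun Y => s(Y, W \ Y))).filter (fun s => Subsplit.Nontriv s)

/-- All nontrivial subsplits whose parent clade is a child clade of `a`. -/
noncomputable def childSubsplits (a : Subsplit α) : Finset (Subsplit α) :=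
  Sym2.lift ⟨fun Y Z => subsplitsOn Y ∪ subsplitsOn Z, fun _ _ => Finset.union_comm _ _⟩ a

end Defs

section CCD

variable {α : Type*} [DecidableEq α]

/-- CCD softmax conditional probability `q(s | U(s))`. -/
noncomputable def ccdCond (v : Subsplit α → ℝ) (s : Subsplit α) : ℝ :=
  Real.exp (v s) / ∑ s' ∈ subsplitsOn (Subsplit.clade s), Real.exp (v s')

/-- CCD probability of a topology: `q(τ) = ∏_{s ∈ τ} q(s | U(s))`. -/
noncomputable def ccdTopProb (v : Subsplit α → ℝ) (τ : Finset (Subsplit α)) : ℝ :=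
  ∏ s ∈ τ, ccdCond v s

/-- Unconditional subsplit probability `q(s)`: sum of `q(τ)` over topologies `τ ∈ T`
containing `s`. -/
noncomputable def ccdSubProb (T : Finset (Finset (Subsplit α))) (v : Subsplit α → ℝ)
    (s : Subsplit α) : ℝ :=
  ∑ τ ∈ T.filter (fun τ => s ∈ τ), ccdTopProb v τ

/-- Unconditional clade probability `q(W)`: sum of `q(τ)` over topologies `τ ∈ T` in which
the clade `W` appears (i.e. `W = X` or `W` is a child clade of some subsplit of `τ`). -/
noncomputable def ccdCladeProb (X : Finset α) (T : Finset (Finset (Subsplit α)))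
    (v : Subsplit α → ℝ) (W : Finset α) : ℝ :=
  ∑ τ ∈ T.filter (fun τ => W = X ∨ ∃ s ∈ τ, W ∈ s), ccdTopProb v τ

/-- Fuel-based recursion computing the CCD conditional path probability. -/
noncomputable def ccdPathAux (v : Subsplit α → ℝ) : ℕ → Subsplit α → Subsplit α → ℝ
  | 0, a, d => if d = a then 1 else 0
  | n + 1, a, d => if d = a then 1 else
      ∑ s'' ∈ childSubsplits a, ccdCond v s'' * ccdPathAux v n s'' d

/-- CCD conditional path probability `q(a →* d | a)`: the sum over all descending chains of
subsplits from `a` to `d` of the product of the conditional probabilities along the chain. -/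
noncomputable def ccdPath (v : Subsplit α → ℝ) (a d : Subsplit α) : ℝ :=
  ccdPathAux v ((Subsplit.clade a).card + 1) a d

/-- CCD conditional path probability starting from a clade:
`q(W →* d | W) = Σ_{s'' : U(s'') = W} q(s'' | U(s'')) q(s'' →* d | s'')`. -/
noncomputable def ccdPathFromClade (v : Subsplit α → ℝ) (W : Finset α) (d : Subsplit α) : ℝ :=
  ∑ s'' ∈ subsplitsOn W, ccdCond v s'' * ccdPath v s'' d

end CCD

section SCD

variable {α : Type*} [DecidableEq α]

/-- SCD softmax conditional probability `q(s | t)`. -/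
noncomputable def scdCond (v : PCSPair α → ℝ) (t s : Subsplit α) : ℝ :=
  Real.exp (v (t, s)) / ∑ s'' ∈ subsplitsOn (Subsplit.clade s), Real.exp (v (t, s''))

/-- SCD probability of a topology `τ` on `X`: the product over PCSPs `(t → s)` of `τ` of
`q(s | t)`. -/
noncomputable def scdTopProb (v : PCSPair α → ℝ) (X : Finset α) (τ : Finset (Subsplit α)) : ℝ :=
  ∏ s ∈ τ, scdCond v (parentIn X τ s) s

/-- Unconditional subsplit probability `q(a)` for SCD-parameterized SBNs. -/
noncomputable def scdSubProb (T : Finset (Finset (Subsplit α))) (v : PCSPair α → ℝ)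
    (X : Finset α) (a : Subsplit α) : ℝ :=
  ∑ τ ∈ T.filter (fun τ => a ∈ τ), scdTopProb v X τ

/-- Fuel-based recursion computing the SCD conditional path probability. -/
noncomputable def scdPathAux (v : PCSPair α → ℝ) : ℕ → Subsplit α → Subsplit α → ℝ
  | 0, a, d => if d = a then 1 else 0
  | n + 1, a, d => if d = a then 1 else
      ∑ s'' ∈ childSubsplits a, scdCond v a s'' * scdPathAux v n s'' d

/-- SCD conditional path probability `q(a →* d | a)`. -/
noncomputable def scdPath (v : PCSPair α → ℝ) (a d : Subsplit α) : ℝ :=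
  scdPathAux v ((Subsplit.clade a).card + 1) a d

/-- SCD conditional path probability from a subsplit `t` with designated child clade `W`:
`q(t/W →* d | t/W) = Σ_{s'' : U(s'') = W} q(s'' | t) q(s'' →* d | s'')`. -/
noncomputable def scdPathFrom (v : PCSPair α → ℝ) (t : Subsplit α) (W : Finset α)
    (d : Subsplit α) : ℝ :=
  ∑ s'' ∈ subsplitsOn W, scdCond v t s'' * scdPath v s'' d

/-- Unconditional ancestor-descendant probability `q(a →* d)`: sum of `q(τ)` over topologies
`τ ∈ T` containing both `a` and `d` with `d` a descendant of `a`. -/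
noncomputable def scdPairProb (T : Finset (Finset (Subsplit α))) (v : PCSPair α → ℝ)
    (X : Finset α) (a d : Subsplit α) : ℝ :=
  ∑ τ ∈ T.filter (fun τ => a ∈ τ ∧ d ∈ τ ∧ Descend a d), scdTopProb v X τ

end SCD

/-!
Let `C` be the child clade of `a` containing `U(d)`. The restricted clade `U(d) ∩ X̄` is a child
clade of `a|X̄` exactly when `C ∩ X̄ = U(d) ∩ X̄`. Walk up the parent chain from `d` to `a`: the
restricted clade `U(s) ∩ X̄` stays equal to `U(d) ∩ X̄` across every subsplit `s` with trivial
restriction (its other child misses `X̄`), while at a subsplit with nontrivial restriction it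
gains a taxon that lies outside `U(d)` but inside `C`. The parent chain exists because the clades
of a topology are laminar, which follows from the uniqueness of the root and of the subsplit
dividing each clade.
-/

lemma Subsplit.Valid.eq_of_mem_of_mem {α : Type*} {s : Subsplit α} (hs : s.Valid)
    {C C' : Finset α} (hC : C ∈ s) (hC' : C' ∈ s) {x : α} (hx : x ∈ C) (hx' : x ∈ C') :
    C = C' := by
  induction s using Sym2.ind with
  | _ Y Z =>
    rw [Sym2.mem_iff] at hC hC'
    rcases hC with rfl | rfl <;> rcases hC' with rfl | rfl
    · rfl
    · exact absurd hx' (disjoint_left.mp hs hx)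
    · exact absurd hx (disjoint_left.mp hs hx')
    · rfl

section Restriction

open Relation

variable {α : Type*} [DecidableEq α]

namespace Subsplit

lemma clade_mk (Y Z : Finset α) : clade s(Y, Z) = Y ∪ Z := rfl

lemma subset_clade_of_mem {s : Subsplit α} {C : Finset α} (hC : C ∈ s) : C ⊆ s.clade := by
  obtain ⟨B, rfl⟩ := Sym2.mem_iff_exists.mp hC
  exact subset_union_left

lemma mem_restrict {s : Subsplit α} {C : Finset α} (hC : C ∈ s) (B : Finset α) :
    C ∩ B ∈ s.restrict B :=
  Sym2.mem_map.mpr ⟨C, hC, rfl⟩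

lemma clade_restrict (s : Subsplit α) (B : Finset α) :
    (s.restrict B).clade = s.clade ∩ B := by
  induction s using Sym2.ind with
  | _ Y Z => exact (union_inter_distrib_right Y Z B).symm

lemma Nontriv.clade_nonempty {s : Subsplit α} (hs : s.Nontriv) : s.clade.Nonempty := by
  induction s using Sym2.ind with
  | _ Y Z => exact hs.1.mono subset_union_left

lemma two_le_card_clade {s : Subsplit α} (hv : s.Valid) (hn : s.Nontriv) :
    2 ≤ s.clade.card := by
  induction s using Sym2.ind with
  | _ Y Z =>
    obtain ⟨⟨y, hy⟩, ⟨z, hz⟩⟩ := hn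
    exact one_lt_card.mpr ⟨y, mem_union_left _ hy, z, mem_union_right _ hz,
      fun hyz => disjoint_left.mp hv hy (hyz ▸ hz)⟩

lemma ssubset_clade_of_mem {s : Subsplit α} (hv : s.Valid) (hn : s.Nontriv) {C : Finset α}
    (hC : C ∈ s) : C ⊂ s.clade := by
  obtain ⟨B, rfl⟩ := Sym2.mem_iff_exists.mp hC
  obtain ⟨b, hb⟩ := hn.2
  exact ⟨subset_union_left, fun h => disjoint_right.mp hv hb (h (mem_union_right _ hb))⟩

lemma not_strictDesc_self {s : Subsplit α} (hv : s.Valid) (hn : s.Nontriv) :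
    ¬ StrictDesc s s := fun ⟨_, hC, hsC⟩ => (ssubset_clade_of_mem hv hn hC).not_subset hsC

lemma clade_inter_eq_of_not_nontriv_restrict {s : Subsplit α} {B C : Finset α}
    (hs : ¬ (s.restrict B).Nontriv) (hC : C ∈ s) (hCB : (C ∩ B).Nonempty) :
    s.clade ∩ B = C ∩ B := by
  obtain ⟨D, rfl⟩ := Sym2.mem_iff_exists.mp hC
  have hDB : D ∩ B = ∅ := not_nonempty_iff_eq_empty.mp fun hDB => hs ⟨hCB, hDB⟩
  rw [clade_mk, union_inter_distrib_right, hDB, union_empty]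

lemma not_nontriv_restrict_of_strictDesc {a x d : Subsplit α} {B : Finset α} (ha : a.Valid)
    (hx : x.Valid) (hax : StrictDesc a x) (hxd : StrictDesc x d)
    (hdB : (d.clade ∩ B).Nonempty) (h : d.clade ∩ B ∈ a.restrict B) :
    ¬ (x.restrict B).Nontriv := by
  obtain ⟨C, hCa, hCB⟩ := Sym2.mem_map.mp h
  obtain ⟨C', hC'a, hxC'⟩ := hax
  obtain ⟨P, hPx, hdP⟩ := hxd
  obtain ⟨z, hz⟩ := hdB
  have hzC : z ∈ C := (mem_inter.mp (hCB ▸ hz)).1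
  have hzC' : z ∈ C' := hxC' (subset_clade_of_mem hPx (hdP (mem_inter.mp hz).1))
  obtain rfl := ha.eq_of_mem_of_mem hCa hC'a hzC hzC'
  obtain ⟨Q, rfl⟩ := Sym2.mem_iff_exists.mp hPx
  rintro ⟨-, q, hq⟩
  obtain ⟨hqQ, hqB⟩ := mem_inter.mp hq
  have hqd : q ∈ d.clade :=
    (mem_inter.mp (hCB ▸ mem_inter.mpr ⟨hxC' (mem_union_right _ hqQ), hqB⟩)).1
  exact disjoint_left.mp hx (hdP hqd) hqQ

end Subsplit

lemma mem_restrictT {τ : Finset (Subsplit α)} {s : Subsplit α} {B : Finset α} (hs : s ∈ τ)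
    (h : (s.restrict B).Nontriv) : s.restrict B ∈ restrictT τ B :=
  mem_filter.mpr ⟨mem_image_of_mem _ hs, h⟩

lemma isPCSPOf_restrictT_iff {τ : Finset (Subsplit α)} {a d : Subsplit α} {B : Finset α}
    (ha : a ∈ τ) (hd : d ∈ τ) (haB : (a.restrict B).Nontriv) (hdB : (d.restrict B).Nontriv) :
    IsPCSPOf B (restrictT τ B) (a.restrict B) (d.restrict B) ↔ d.clade ∩ B ∈ a.restrict B := by
  have ha_ne : a.restrict B ≠ s(B, ∅) := fun h => Finset.not_nonempty_empty (h ▸ haB).2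
  simp [IsPCSPOf, Subsplit.clade_restrict, mem_restrictT ha haB, mem_restrictT hd hdB, ha_ne]

def IsChildIn (τ : Finset (Subsplit α)) (s t : Subsplit α) : Prop := t ∈ τ ∧ s.clade ∈ t

lemma eq_or_strictDesc_of_reflTransGen_isChildIn {τ : Finset (Subsplit α)} {s u : Subsplit α}
    (h : ReflTransGen (IsChildIn τ) s u) : s = u ∨ StrictDesc u s := by
  induction h using ReflTransGen.head_induction_on with
  | refl => exact .inl rfl
  | head hst _ ih =>
    rcases ih with rfl | ⟨C, hC, htC⟩
    · exact .inr ⟨_, hst.2, subset_rfl⟩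
    · exact .inr ⟨C, hC, (Subsplit.subset_clade_of_mem hst.2).trans htC⟩

namespace IsTopology

variable {W : Finset α} {τ : Finset (Subsplit α)}

lemma injOn_clade (hτ : IsTopology W τ) : Set.InjOn Subsplit.clade (τ : Set (Subsplit α)) := by
  intro s hs s' hs' h
  rcases hτ.parentEx s hs with hsW | ⟨t, ht, hst⟩
  · exact hτ.root.unique ⟨hs, hsW⟩ ⟨hs', h ▸ hsW⟩
  · exact (hτ.children t ht _ hst (Subsplit.two_le_card_clade (hτ.valid s hs)
      (hτ.nontriv s hs))).unique ⟨hs, rfl⟩ ⟨hs', h.symm⟩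

lemma reflTransGen_root (hτ : IsTopology W τ) {r s : Subsplit α} (hr : r ∈ τ)
    (hrW : r.clade = W) (hs : s ∈ τ) : ReflTransGen (IsChildIn τ) s r := by
  induction hn : τ.sup (fun t => t.clade.card) - s.clade.card using Nat.strong_induction_on
    generalizing s with
  | _ n ih =>
    rcases hτ.parentEx s hs with hsW | ⟨t, ht, hst⟩
    · rw [hτ.injOn_clade hs hr (hsW.trans hrW.symm)]
    · have hlt : s.clade.card < t.clade.card :=
        card_lt_card (Subsplit.ssubset_clade_of_mem (hτ.valid t ht) (hτ.nontriv t ht) hst)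
      have hle : t.clade.card ≤ τ.sup (fun t => t.clade.card) :=
        le_sup (f := fun t => t.clade.card) ht
      exact .head ⟨ht, hst⟩ (ih _ (by omega) ht rfl)

lemma reflTransGen_child_of_reflTransGen (hτ : IsTopology W τ) {p e d : Subsplit α}
    (hp : p ∈ τ) (he : e ∈ τ) (hep : e.clade ∈ p) (hd : d ∈ τ)
    (hdp : ReflTransGen (IsChildIn τ) d p) (hde : d.clade ⊆ e.clade) :
    ReflTransGen (IsChildIn τ) d e := by
  induction hdp using ReflTransGen.head_induction_on with
  | refl =>
    exact absurd hde
      (Subsplit.ssubset_clade_of_mem (hτ.valid p hp) (hτ.nontriv p hp) hep).not_subset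
  | @head d t hdt htp ih =>
    obtain ⟨x, hx⟩ := (hτ.nontriv d hd).clade_nonempty
    rcases eq_or_strictDesc_of_reflTransGen_isChildIn htp with rfl | ⟨C, hC, htC⟩
    · obtain rfl := hτ.injOn_clade hd he
        ((hτ.valid t hp).eq_of_mem_of_mem hdt.2 hep hx (hde hx))
      exact .refl
    · obtain rfl := (hτ.valid p hp).eq_of_mem_of_mem hC hep
        (htC (Subsplit.subset_clade_of_mem hdt.2 hx)) (hde hx)
      exact .head hdt (ih hdt.1 htC)

lemma reflTransGen_of_clade_subset (hτ : IsTopology W τ) {d e g : Subsplit α} (hd : d ∈ τ)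
    (he : e ∈ τ) (hdg : ReflTransGen (IsChildIn τ) d g) (heg : ReflTransGen (IsChildIn τ) e g)
    (hde : d.clade ⊆ e.clade) : ReflTransGen (IsChildIn τ) d e := by
  induction heg using ReflTransGen.head_induction_on with
  | refl => exact hdg
  | @head e p hep _ ih =>
    exact hτ.reflTransGen_child_of_reflTransGen hep.1 he hep.2 hd
      (ih hep.1 (hde.trans (Subsplit.subset_clade_of_mem hep.2))) hde

lemma reflTransGen_of_strictDesc (hτ : IsTopology W τ) {a d : Subsplit α} (ha : a ∈ τ)
    (hd : d ∈ τ) (h : StrictDesc a d) : ReflTransGen (IsChildIn τ) d a := by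
  obtain ⟨C, hC, hdC⟩ := h
  obtain ⟨r, ⟨hr, hrW⟩, -⟩ := hτ.root
  exact hτ.reflTransGen_of_clade_subset hd ha (hτ.reflTransGen_root hr hrW hd)
    (hτ.reflTransGen_root hr hrW ha) (hdC.trans (Subsplit.subset_clade_of_mem hC))

lemma clade_inter_mem_restrict (hτ : IsTopology W τ) {a d : Subsplit α} {B : Finset α}
    (ha : a ∈ τ) (hd : d ∈ τ) (had : StrictDesc a d) (hdB : (d.clade ∩ B).Nonempty)
    (hbetween : ∀ x ∈ τ, StrictDesc a x → StrictDesc x d → ¬ (x.restrict B).Nontriv) :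
    d.clade ∩ B ∈ a.restrict B := by
  suffices key : ∀ y, ReflTransGen (IsChildIn τ) y a → StrictDesc a y →
      d.clade ⊆ y.clade → y.clade ∩ B = d.clade ∩ B → d.clade ∩ B ∈ a.restrict B from
    key d (hτ.reflTransGen_of_strictDesc ha hd had) had subset_rfl rfl
  intro y hya
  induction hya using ReflTransGen.head_induction_on with
  | refl =>
    exact fun haa => absurd haa (Subsplit.not_strictDesc_self (hτ.valid a ha) (hτ.nontriv a ha))
  | @head y t hyt hta ih =>
    intro _ hdy hyB
    rcases eq_or_strictDesc_of_reflTransGen_isChildIn hta with rfl | hat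
    · exact hyB ▸ Subsplit.mem_restrict hyt.2 B
    · have htB := Subsplit.clade_inter_eq_of_not_nontriv_restrict
        (hbetween t hyt.1 hat ⟨y.clade, hyt.2, hdy⟩) hyt.2 (hyB ▸ hdB)
      exact ih hat (hdy.trans (Subsplit.subset_clade_of_mem hyt.2)) (htB.trans hyB)

end IsTopology

end Restriction

section Statements

variable {α : Type*} [DecidableEq α]
theorem stmt13_general (X Xb : Finset α)
    (τ : Finset (Subsplit α)) (hτ : IsTopology X τ)
    (a d : Subsplit α) (ha : a ∈ τ) (hd : d ∈ τ) (hdesc : StrictDesc a d)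
    (hant : Subsplit.Nontriv (Subsplit.restrict a Xb))
    (hdnt : Subsplit.Nontriv (Subsplit.restrict d Xb)) :
    IsPCSPOf Xb (restrictT τ Xb) (Subsplit.restrict a Xb) (Subsplit.restrict d Xb) ↔
      ∀ x ∈ τ, StrictDesc a x → StrictDesc x d →
        ¬ Subsplit.Nontriv (Subsplit.restrict x Xb) := by
  have hdXb : (d.clade ∩ Xb).Nonempty := Subsplit.clade_restrict d Xb ▸ hdnt.clade_nonempty
  rw [isPCSPOf_restrictT_iff ha hd hant hdnt]
  exact ⟨fun h x hx hax hxd => Subsplit.not_nontriv_restrict_of_strictDesc (hτ.valid a ha)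
      (hτ.valid x hx) hax hxd hdXb h,
    hτ.clade_inter_mem_restrict ha hd hdesc hdXb⟩

theorem stmt13 (X Xb : Finset α) (hsub : Xb ⊆ X)
    (τ : Finset (Subsplit α)) (hτ : IsTopology X τ)
    (a d : Subsplit α) (ha : a ∈ τ) (hd : d ∈ τ) (hdesc : StrictDesc a d)
    (hant : Subsplit.Nontriv (Subsplit.restrict a Xb))
    (hdnt : Subsplit.Nontriv (Subsplit.restrict d Xb)) :
    IsPCSPOf Xb (restrictT τ Xb) (Subsplit.restrict a Xb) (Subsplit.restrict d Xb) ↔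
      ∀ x ∈ τ, StrictDesc a x → StrictDesc x d →
        ¬ Subsplit.Nontriv (Subsplit.restrict x Xb) :=
  stmt13_general X Xb τ hτ a d ha hd hdesc hant hdnt

end Statements
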